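/- arXiv:2202.03301 — 8 statements merged into one kernel-verified Lean document; each statement's English description precedes it below -/
import Mathlib

section
/- Let q be a prime power and r, δ, ℓ, u positive integers. Suppose H is a parity-check matrix of a q-ary (r,δ) locally repairable code with ℓ disjoint local repair groups, where each local group of r+δ−1 coordinates forms an [r+δ−1, r, δ] MDS subcode, and the lower part of H has u rows. If the minimum distance d of the code satisfies d ≥ 2δ+1, then ℓ ≤ ⌊(q^u − 1) / ((q−1) · C(r+δ−1, δ))⌋. -/
/-- Hamming norm of a function on a product index splits as a sum over the first factor. -/
lemma aux_hammingNorm_prod {F : Type*} [Zero F] [DecidableEq F] {a b : ℕ}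
    (c : Fin a → Fin b → F) :
    hammingNorm (fun p : Fin a × Fin b => c p.1 p.2) = ∑ i, hammingNorm (c i) := by
  classical
  calc hammingNorm (fun p : Fin a × Fin b => c p.1 p.2)
      = Fintype.card {p : Fin a × Fin b // c p.1 p.2 ≠ 0} := (Fintype.card_subtype _).symm
    _ = Fintype.card (Σ i : Fin a, {j : Fin b // c i j ≠ 0}) :=
        Fintype.card_congr (Equiv.subtypeProdEquivSigmaSubtype fun i j => c i j ≠ 0)
    _ = ∑ i, Fintype.card {j : Fin b // c i j ≠ 0} := Fintype.card_sigma
    _ = ∑ i, hammingNorm (c i) := by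
        refine Finset.sum_congr rfl fun i _ => ?_
        rw [Fintype.card_subtype]; rfl

/-- Improved bound on the number `ℓ` of disjoint local repair groups of a `q`-ary `(r,δ)`
LRC whose parity-check matrix `H` is in standard form: `ℓ` diagonal locality blocks
`Hloc i ∈ F^{(δ−1)×(r+δ−1)}`, each the parity-check matrix of an `[r+δ−1, r, δ]` MDS code
(equivalently, every `δ−1` of its columns are linearly independent), together with `u`
extra rows `(W 1 | ⋯ | W ℓ)`.  If the minimum distance of the code with parity-check
matrix `H` satisfies `d ≥ 2δ+1`, then `ℓ ≤ ⌊(q^u − 1)/((q−1)·C(r+δ−1, δ))⌋`. -/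
theorem stmt_0 {F : Type*} [Field F] [Fintype F] [DecidableEq F]
    (q r δ ℓ u : ℕ) (hq : Fintype.card F = q)
    (hr : 0 < r) (hδ : 2 ≤ δ) (hℓ : 0 < ℓ) (hu : 0 < u)
    (Hloc : Fin ℓ → Matrix (Fin (δ - 1)) (Fin (r + δ - 1)) F)
    (W : Fin ℓ → Matrix (Fin u) (Fin (r + δ - 1)) F)
    (hMDS : ∀ i : Fin ℓ, ∀ s : Finset (Fin (r + δ - 1)), s.card = δ - 1 →
      LinearIndependent F (fun j : s => fun t : Fin (δ - 1) => Hloc i t j.1))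
    (H : Matrix ((Fin ℓ × Fin (δ - 1)) ⊕ Fin u) (Fin ℓ × Fin (r + δ - 1)) F)
    (hH : ∀ row col, H row col = Sum.elim
      (fun p : Fin ℓ × Fin (δ - 1) => if p.1 = col.1 then Hloc p.1 p.2 col.2 else 0)
      (fun t : Fin u => W col.1 t col.2) row)
    (hdist : ∀ x : Fin ℓ × Fin (r + δ - 1) → F,
      H.mulVec x = 0 → x ≠ 0 → 2 * δ + 1 ≤ hammingNorm x) :
    ℓ ≤ (q ^ u - 1) / ((q - 1) * Nat.choose (r + δ - 1) δ) := by
  classical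
  have hq2 : 2 ≤ q := hq ▸ Fintype.one_lt_card
  -- Key lemma: any small-weight vector in the kernel (blockwise) is zero.
  have key : ∀ c : Fin ℓ → Fin (r + δ - 1) → F,
      (∀ i, (Hloc i).mulVec (c i) = 0) →
      (∑ i, (W i).mulVec (c i)) = 0 →
      (∑ i, hammingNorm (c i)) ≤ 2 * δ →
      ∀ i, c i = 0 := by
    intro c h1 h2 h3
    set x : Fin ℓ × Fin (r + δ - 1) → F := fun p => c p.1 p.2 with hxdef
    have e1 : ∀ (i : Fin ℓ) (t : Fin (δ - 1)),
        H.mulVec x (Sum.inl (i, t)) = (Hloc i).mulVec (c i) t := by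
      intro i t
      simp only [Matrix.mulVec, dotProduct, Fintype.sum_prod_type]
      rw [Finset.sum_eq_single i]
      · refine Finset.sum_congr rfl fun j _ => ?_
        rw [hH]; simp [x]
      · intro i' _ hne
        refine Finset.sum_eq_zero fun j _ => ?_
        rw [hH]; simp [hne.symm]
      · intro h; exact absurd (Finset.mem_univ i) h
    have e2 : ∀ t : Fin u,
        H.mulVec x (Sum.inr t) = ∑ i, (W i).mulVec (c i) t := by
      intro t
      simp only [Matrix.mulVec, dotProduct, Fintype.sum_prod_type]
      refine Finset.sum_congr rfl fun i _ => Finset.sum_congr rfl fun j _ => ?_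
      rw [hH]; simp [x]
    have hHx : H.mulVec x = 0 := by
      funext row
      rcases row with ⟨i, t⟩ | t
      · rw [e1 i t, h1 i]; rfl
      · rw [e2 t]
        have := congrFun h2 t
        rw [Finset.sum_apply] at this
        simpa using this
    by_contra hcon
    obtain ⟨i, hi⟩ := not_forall.mp hcon
    have hx0 : x ≠ 0 := by
      intro h
      exact hi (funext fun j => congrFun h (i, j))
    have hd := hdist x hHx hx0
    rw [hxdef, aux_hammingNorm_prod] at hd
    omega
  -- Corollary 1: single-block version.
  have cor1 : ∀ (i : Fin ℓ) (d : Fin (r + δ - 1) → F),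
      (Hloc i).mulVec d = 0 → (W i).mulVec d = 0 → hammingNorm d ≤ 2 * δ → d = 0 := by
    intro i d h1 h2 h3
    have hite : ∀ i' : Fin ℓ, (W i').mulVec (if i' = i then d else 0)
        = if i' = i then (W i).mulVec d else 0 := by
      intro i'
      by_cases h : i' = i
      · subst h; simp
      · simp [h, Matrix.mulVec_zero]
    have := key (fun i' => if i' = i then d else 0)
      (by intro i'
          by_cases h : i' = i
          · subst h; simpa using h1
          · simp [h, Matrix.mulVec_zero])
      (by rw [Finset.sum_congr rfl fun i' _ => hite i', Finset.sum_ite_eq' Finset.univ i]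
          simp [h2])
      (by have : ∀ i' : Fin ℓ, hammingNorm (if i' = i then d else 0)
              = if i' = i then hammingNorm d else 0 := by
            intro i'; split <;> simp
          rw [Finset.sum_congr rfl fun i' _ => this i', Finset.sum_ite_eq' Finset.univ i]
          simpa using h3) i
    simpa using this
  -- Corollary 2: two-block version.
  have cor2 : ∀ (i i' : Fin ℓ), i ≠ i' → ∀ (d d' : Fin (r + δ - 1) → F),
      (Hloc i).mulVec d = 0 → (Hloc i').mulVec d' = 0 →
      (W i).mulVec d + (W i').mulVec d' = 0 →
      hammingNorm d + hammingNorm d' ≤ 2 * δ → d = 0 := by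
    intro i i' hii d d' h1 h1' h2 h3
    set c : Fin ℓ → Fin (r + δ - 1) → F :=
      fun k => if k = i then d else if k = i' then d' else 0 with hc
    have hsplit : ∀ (M : (Fin (r + δ - 1) → F) → (Fin u → F)), M 0 = 0 → ∀ k,
        M (c k) = (if k = i then M d else 0) + (if k = i' then M d' else 0) := by
      intro M hM0 k
      by_cases h : k = i
      · subst h
        simp [c, if_neg (fun h' => hii h'), hM0]
      · by_cases h' : k = i'
        · subst h'; simp [c, h, hM0]
        · simp [c, h, h', hM0]
    have := key c
      (by intro k
          by_cases h : k = i
          · subst h; simpa [c, fun h' => hii h'] using h1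
          · by_cases h' : k = i'
            · subst h'; simpa [c, h] using h1'
            · simp [c, h, h', Matrix.mulVec_zero])
      (by have : ∀ k, (W k).mulVec (c k)
              = (if k = i then (W i).mulVec d else 0) + (if k = i' then (W i').mulVec d' else 0) := by
            intro k
            by_cases h : k = i
            · subst h; simp [c, fun h' => hii h', Matrix.mulVec_zero]
            · by_cases h' : k = i'
              · subst h'; simp [c, h, Matrix.mulVec_zero]
              · simp [c, h, h', Matrix.mulVec_zero]
          rw [Finset.sum_congr rfl fun k _ => this k, Finset.sum_add_distrib,
            Finset.sum_ite_eq' Finset.univ i, Finset.sum_ite_eq' Finset.univ i']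
          simpa using h2)
      (by have : ∀ k, hammingNorm (c k)
              = (if k = i then hammingNorm d else 0) + (if k = i' then hammingNorm d' else 0) := by
            intro k
            by_cases h : k = i
            · subst h; simp [c, fun h' => hii h']
            · by_cases h' : k = i'
              · subst h'; simp [c, h]
              · simp [c, h, h']
          rw [Finset.sum_congr rfl fun k _ => this k, Finset.sum_add_distrib,
            Finset.sum_ite_eq' Finset.univ i, Finset.sum_ite_eq' Finset.univ i']
          simpa using h3) i
    simpa [c] using this
  -- Existence of full-support dependencies on any δ columns of a local block.
  have exdep : ∀ (i : Fin ℓ) (S : Finset (Fin (r + δ - 1))), S.card = δ →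
      ∃ cc : Fin (r + δ - 1) → F, (Hloc i).mulVec cc = 0 ∧
        (∀ j, j ∉ S → cc j = 0) ∧ ∀ j ∈ S, cc j ≠ 0 := by
    intro i S hS
    have hdep : ¬ LinearIndependent F (fun j : S => fun t : Fin (δ - 1) => Hloc i t j.1) := by
      intro hli
      have hle := hli.fintype_card_le_finrank
      rw [Module.finrank_fin_fun] at hle
      rw [Fintype.card_coe, hS] at hle
      omega
    obtain ⟨g, hg0, j1, hj1⟩ := Fintype.not_linearIndependent_iff.mp hdep
    set cc : Fin (r + δ - 1) → F := fun j => if h : j ∈ S then g ⟨j, h⟩ else 0 with hccdef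
    have hccS : ∀ j : S, cc j.1 = g j := by
      intro j; simp [cc]
    have hsum : ∀ t, ∑ j, Hloc i t j * cc j = 0 := by
      intro t
      have h0 := congrFun hg0 t
      rw [Finset.sum_apply] at h0
      calc ∑ j, Hloc i t j * cc j
          = ∑ j ∈ S, Hloc i t j * cc j := by
            refine (Finset.sum_subset (Finset.subset_univ S) ?_).symm
            intro j _ hj; simp [cc, hj]
        _ = ∑ j : S, Hloc i t j.1 * cc j.1 := (Finset.sum_coe_sort S (fun j => Hloc i t j * cc j)).symm
        _ = ∑ j : S, g j • (fun t' => Hloc i t' j.1) t := by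
            refine Finset.sum_congr rfl fun j _ => ?_
            rw [hccS j]; simp [mul_comm]
        _ = 0 := h0
    have hmv : (Hloc i).mulVec cc = 0 := by
      funext t
      simpa [Matrix.mulVec, dotProduct] using hsum t
    refine ⟨cc, hmv, fun j hj => by simp [cc, hj], ?_⟩
    intro j0 hj0 hc0
    have hS' : (S.erase j0).card = δ - 1 := by
      rw [Finset.card_erase_of_mem hj0, hS]
    have hli := hMDS i (S.erase j0) hS'
    rw [Fintype.linearIndependent_iff] at hli
    have hz : ∑ j : (S.erase j0 : Finset _), cc j.1 • (fun t : Fin (δ - 1) => Hloc i t j.1) = 0 := by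
      funext t
      rw [Finset.sum_apply]
      have : ∑ j : (S.erase j0 : Finset _), cc j.1 * Hloc i t j.1
          = ∑ j ∈ S.erase j0, cc j * Hloc i t j := Finset.sum_coe_sort (S.erase j0) (fun j => cc j * Hloc i t j)
      simp only [Pi.smul_apply, smul_eq_mul, Pi.zero_apply]
      rw [this]
      calc ∑ j ∈ S.erase j0, cc j * Hloc i t j
          = ∑ j ∈ S, cc j * Hloc i t j := by
            refine Finset.sum_subset (Finset.erase_subset _ _) ?_
            intro j hjS hj
            have : j = j0 := by
              by_contra hne
              exact hj (Finset.mem_erase.mpr ⟨hne, hjS⟩)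
            rw [this, hc0, zero_mul]
        _ = ∑ j, cc j * Hloc i t j := by
            refine Finset.sum_subset (Finset.subset_univ S) ?_
            intro j _ hj; simp [cc, hj]
        _ = 0 := by
            rw [← hsum t]
            exact Finset.sum_congr rfl fun j _ => mul_comm _ _
    have hall := hli (fun j => cc j.1) hz
    have hj1ne : cc j1.1 ≠ 0 := by rw [hccS j1]; exact hj1
    rcases eq_or_ne j1.1 j0 with h | h
    · exact hj1ne (h ▸ hc0)
    · exact hj1ne (hall ⟨j1.1, Finset.mem_erase.mpr ⟨h, j1.2⟩⟩)
  choose cc hcc1 hcc2 hcc3 using exdep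
  -- weight bound for the chosen dependencies
  have hnorm : ∀ (i : Fin ℓ) (S : Finset (Fin (r + δ - 1))) (hS : S.card = δ),
      hammingNorm (cc i S hS) ≤ δ := by
    intro i S hS
    refine le_trans (Finset.card_le_card ?_) hS.le
    intro j hj
    rw [Finset.mem_filter] at hj
    by_contra hjS
    exact hj.2 (hcc2 i S hS j hjS)
  -- the lower syndromes are nonzero
  have hvne : ∀ (i : Fin ℓ) (S : Finset (Fin (r + δ - 1))) (hS : S.card = δ),
      (W i).mulVec (cc i S hS) ≠ 0 := by
    intro i S hS h0
    have hz := cor1 i _ (hcc1 i S hS) h0 (le_trans (hnorm i S hS) (by omega))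
    obtain ⟨j, hj⟩ := Finset.card_pos.mp (show 0 < S.card by omega)
    exact hcc3 i S hS j hj (by rw [hz]; rfl)
  -- the injection into nonzero vectors of F^u
  set Φ : Fin ℓ × {s : Finset (Fin (r + δ - 1)) // s.card = δ} × Fˣ → {v : Fin u → F // v ≠ 0} :=
    fun t => ⟨(t.2.2 : F) • (W t.1).mulVec (cc t.1 t.2.1.1 t.2.1.2), by
      intro h
      rcases smul_eq_zero.mp h with h | h
      · exact t.2.2.ne_zero h
      · exact hvne _ _ _ h⟩ with hΦ
  have hinj : Function.Injective Φ := by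
    rintro ⟨i, ⟨S, hS⟩, lam⟩ ⟨i', ⟨S', hS'⟩, lam'⟩ heq
    simp only [hΦ, Subtype.mk.injEq] at heq
    set d : Fin (r + δ - 1) → F := (lam : F) • cc i S hS with hd
    set d' : Fin (r + δ - 1) → F := (lam' : F) • cc i' S' hS' with hd'
    have hWd : (W i).mulVec d = (W i').mulVec d' := by
      rw [hd, hd', Matrix.mulVec_smul, Matrix.mulVec_smul]
      exact heq
    have hLd : (Hloc i).mulVec d = 0 := by
      rw [hd, Matrix.mulVec_smul, hcc1, smul_zero]
    have hLd' : (Hloc i').mulVec d' = 0 := by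
      rw [hd', Matrix.mulVec_smul, hcc1, smul_zero]
    have hnd : hammingNorm d ≤ δ :=
      le_trans hammingNorm_smul_le_hammingNorm (hnorm i S hS)
    have hnd' : hammingNorm d' ≤ δ :=
      le_trans hammingNorm_smul_le_hammingNorm (hnorm i' S' hS')
    by_cases hii : i = i'
    · subst hii
      have hsub : (W i).mulVec (d - d') = 0 := by
        rw [Matrix.mulVec_sub, hWd, sub_self]
      have hsubL : (Hloc i).mulVec (d - d') = 0 := by
        rw [Matrix.mulVec_sub, hLd, hLd', sub_self]
      have hsubn : hammingNorm (d - d') ≤ 2 * δ := by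
        have h1 : hammingNorm (d - d') = hammingDist d d' :=
          by rw [hammingDist_comm, hammingDist_eq_hammingNorm, neg_add_eq_sub]
        have h2 := hammingDist_triangle d 0 d'
        rw [hammingDist_zero_right] at h2
        have h3 : hammingDist (0 : Fin (r + δ - 1) → F) d' = hammingNorm d' := by
          rw [hammingDist_comm, hammingDist_zero_right]
        omega
      have hdd : d = d' := sub_eq_zero.mp (cor1 i _ hsubL hsub hsubn)
      have hSS : S = S' := by
        by_contra hne
        have hnsub : ¬ S ⊆ S' := fun h =>
          hne (Finset.eq_of_subset_of_card_le h (by rw [hS, hS']))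
        obtain ⟨j, hjS, hjS'⟩ := Finset.not_subset.mp hnsub
        have hj0 : d' j = 0 := by
          rw [hd']; simp [hcc2 _ S' hS' j hjS']
        have hj1 : d j ≠ 0 := by
          rw [hd]
          simp only [Pi.smul_apply, smul_eq_mul]
          exact mul_ne_zero lam.ne_zero (hcc3 i S hS j hjS)
        exact hj1 (hdd ▸ hj0)
      subst hSS
      have hlam : (lam : F) = (lam' : F) := by
        obtain ⟨j, hj⟩ := Finset.card_pos.mp (show 0 < S.card by omega)
        have := congrFun hdd j
        simp only [hd, hd', Pi.smul_apply, smul_eq_mul] at this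
        exact mul_right_cancel₀ (hcc3 i S hS j hj) this
      have : lam = lam' := Units.ext hlam
      subst this
      rfl
    · exfalso
      have hWsum : (W i).mulVec d + (W i').mulVec (-d') = 0 := by
        rw [Matrix.mulVec_neg, hWd, add_neg_cancel]
      have hLn : (Hloc i').mulVec (-d') = 0 := by
        rw [Matrix.mulVec_neg, hLd', neg_zero]
      have hnn : hammingNorm (-d') = hammingNorm d' := by
        simp [hammingNorm, neg_ne_zero]
      have hz := cor2 i i' hii d (-d') hLd hLn hWsum (by omega)
      obtain ⟨j, hj⟩ := Finset.card_pos.mp (show 0 < S.card by omega)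
      have : d j = 0 := by rw [hz]; rfl
      rw [hd] at this
      simp only [Pi.smul_apply, smul_eq_mul] at this
      rcases mul_eq_zero.mp this with h | h
      · exact lam.ne_zero h
      · exact hcc3 i S hS j hj h
  have hcard := Fintype.card_le_of_injective Φ hinj
  have hdom : Fintype.card (Fin ℓ × {s : Finset (Fin (r + δ - 1)) // s.card = δ} × Fˣ)
      = ℓ * (Nat.choose (r + δ - 1) δ * (q - 1)) := by
    rw [Fintype.card_prod, Fintype.card_prod, Fintype.card_finset_len,
      Fintype.card_units, Fintype.card_fin, Fintype.card_fin, hq]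
  have hcod : Fintype.card {v : Fin u → F // v ≠ 0} = q ^ u - 1 := by
    have h1 : Fintype.card {v : Fin u → F // ¬ v = 0} =
        Fintype.card (Fin u → F) - Fintype.card {v : Fin u → F // v = 0} :=
      Fintype.card_subtype_compl _
    have h2 : Fintype.card {v : Fin u → F // v = 0} = 1 := Fintype.card_subtype_eq _
    have h3 : Fintype.card (Fin u → F) = q ^ u := by
      rw [Fintype.card_fun, hq, Fintype.card_fin]
    calc Fintype.card {v : Fin u → F // v ≠ 0}
        = Fintype.card (Fin u → F) - Fintype.card {v : Fin u → F // v = 0} := h1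
      _ = q ^ u - 1 := by rw [h2, h3]
  rw [hdom, hcod] at hcard
  have hCpos : 0 < Nat.choose (r + δ - 1) δ := Nat.choose_pos (by omega)
  have hpos : 0 < (q - 1) * Nat.choose (r + δ - 1) δ :=
    Nat.mul_pos (by omega) hCpos
  rw [Nat.le_div_iff_mul_le hpos]
  calc ℓ * ((q - 1) * Nat.choose (r + δ - 1) δ)
      = ℓ * (Nat.choose (r + δ - 1) δ * (q - 1)) := by ring
    _ ≤ q ^ u - 1 := hcard
end

section
/- Let n, k, d, r, δ be positive integers with (r+δ−1) | n, and set ℓ = n/(r+δ−1). If d = n − k + 1 − (⌈k/r⌉ − 1)(δ−1) (i.e., the generalized Singleton-type bound for (r,δ) LRCs is achieved with equality), then n − k = ℓ(δ−1) + d − 1 − (⌊(d−δ)/(r+δ−1)⌋ + 1)(δ−1). -/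
/-- If the generalized Singleton-type bound for `(r,δ)` LRCs is achieved with equality,
i.e. `d = n − k + 1 − (⌈k/r⌉ − 1)(δ−1)`, with `(r+δ−1) ∣ n` and `ℓ = n/(r+δ−1)`, then
`n − k = ℓ(δ−1) + d − 1 − (⌊(d−δ)/(r+δ−1)⌋ + 1)(δ−1)`. -/
theorem stmt_1 (n k d r δ ℓ : ℕ) (hn : 0 < n) (hk : 0 < k) (hd : 0 < d)
    (hr : 0 < r) (hδ : 0 < δ)
    (hdvd : (r + δ - 1) ∣ n) (hℓ : ℓ = n / (r + δ - 1))
    (hopt : (d : ℤ) = (n : ℤ) - k + 1 - (⌈(k : ℚ) / r⌉ - 1) * (δ - 1)) :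
    (n : ℤ) - k = ℓ * (δ - 1) + d - 1
      - (⌊((d : ℚ) - δ) / (r + δ - 1)⌋ + 1) * ((δ : ℤ) - 1) := by
  set c : ℤ := ⌈(k : ℚ) / r⌉ with hc
  have hr' : (0 : ℚ) < (r : ℚ) := by positivity
  have hm : (0 : ℤ) < (r : ℤ) + δ - 1 := by
    have : 1 ≤ r := hr
    have : 1 ≤ δ := hδ
    omega
  have hmQ : (0 : ℚ) < (r : ℚ) + δ - 1 := by exact_mod_cast hm
  -- bounds on c
  have hk1 : (k : ℤ) ≤ c * r := by
    have h1 : ((k : ℚ) / r) ≤ c := Int.le_ceil _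
    have := (div_le_iff₀ hr').mp h1
    exact_mod_cast this
  have hk2 : (c - 1) * r < (k : ℤ) := by
    have h2 : (c : ℚ) - 1 < (k : ℚ) / r := by
      have := Int.ceil_lt_add_one ((k : ℚ) / r)
      push_cast at this ⊢
      linarith
    have := (lt_div_iff₀ hr').mp h2
    exact_mod_cast this
  -- n = ℓ * (r + δ - 1)
  have hnℤ : (n : ℤ) = (ℓ : ℤ) * ((r : ℤ) + δ - 1) := by
    have h1 : ℓ * (r + δ - 1) = n := by
      rw [hℓ]; exact Nat.div_mul_cancel hdvd
    have h2 : ((ℓ * (r + δ - 1) : ℕ) : ℤ) = (n : ℤ) := by rw [h1]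
    push_cast [Nat.cast_sub (by omega : 1 ≤ r + δ)] at h2
    linarith [h2]
  -- the floor computation
  have hfloor : ⌊((d : ℚ) - δ) / ((r : ℚ) + δ - 1)⌋ = (ℓ : ℤ) - c := by
    rw [Int.floor_eq_iff]
    constructor
    · rw [le_div_iff₀ hmQ]
      have key : ((ℓ : ℤ) - c) * ((r : ℤ) + δ - 1) ≤ (d : ℤ) - δ := by
        have hring : c * ((r : ℤ) + δ - 1) - (c - 1) * ((δ : ℤ) - 1) + 1 - δ = c * r := by
          ring
        rw [hopt, hnℤ]
        nlinarith [hk1, hring]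
      have h : ((ℓ : ℚ) - c) * ((r : ℚ) + δ - 1) ≤ (d : ℚ) - δ := by exact_mod_cast key
      push_cast at h ⊢
      linarith
    · rw [div_lt_iff₀ hmQ]
      have key : (d : ℤ) - δ < ((ℓ : ℤ) - c + 1) * ((r : ℤ) + δ - 1) := by
        rw [hopt, hnℤ]
        have hδ1 : (1 : ℤ) ≤ δ := by exact_mod_cast hδ
        nlinarith [hk2]
      have h : (d : ℚ) - δ < ((ℓ : ℚ) - c + 1) * ((r : ℚ) + δ - 1) := by exact_mod_cast key
      push_cast at h ⊢
      linarith
  rw [hfloor, hopt]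
  ring
end

section
/- Let q ≥ δ+1 with δ ≥ 2. Suppose V₁ = Span{u₁, v₁} and V₂ = Span{u₂, v₂} are subspaces of F_q^3 arising from the lower part of a parity-check matrix of an optimal (n, k, d = 2δ+2; r = 2, δ) LRC with disjoint repair groups. Then: (i) dim(V_i) = 2 for each i; and (ii) for any j ≠ i, the vectors u_i, v_i, and a_m u_i + b_m v_i (for every pair (a_m, b_m) ∈ F_q^* × F_q^* with a_m p_{i,m} + b_m q_{i,m} = 0, m ∈ [δ−1]) do not belong to V_j. -/
/-!
A vector supported on the repair group `i` is determined by its last two coordinates `(a, b)`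
once it satisfies the local checks `(I | pᵢ | qᵢ)`: its first `δ - 1` coordinates are then
`-(a pᵢ + b qᵢ)`, and its syndrome is `a uᵢ + b vᵢ` on the lower rows. So a dependence
`a uᵢ + b vᵢ = 0` gives a codeword of weight at most `δ + 1`. A relation
`a uᵢ + b vᵢ = c uⱼ + d vⱼ` with `j ≠ i` gives the difference of two such words, a codeword of
weight at most `δ + (δ + 1)` whenever the word of group `i` has a zero coordinate, as it has for
`(a, b) = (1, 0)`, `(0, 1)` and `(aₘ, bₘ)`. Both contradict `d = 2δ + 2`.
-/

open Finset Matrix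

lemma Matrix.mulVec_uncurry_single {ι m n R : Type*} [Fintype ι] [DecidableEq ι] [Fintype n]
    [NonUnitalNonAssocSemiring R] (M : Matrix m (ι × n) R) (i : ι) (w : n → R) :
    M *ᵥ Function.uncurry (Pi.single i w) = M.submatrix id (Prod.mk i) *ᵥ w := by
  ext r
  simp only [mulVec, dotProduct, Fintype.sum_prod_type, Function.uncurry_apply_pair]
  rw [Fintype.sum_eq_single i fun k hk => by simp [Pi.single_eq_of_ne hk]]
  simp

section hamming

variable {ι β : Type*} [Fintype ι] [DecidableEq β]

lemma hammingNorm_add_le [AddZeroClass β] (x y : ι → β) :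
    hammingNorm (x + y) ≤ hammingNorm x + hammingNorm y := by
  classical
  refine (card_le_card fun k hk => ?_).trans (card_union_le _ _)
  simp only [mem_filter, mem_univ, true_and, mem_union, Pi.add_apply] at hk ⊢
  by_contra! h
  simp [h.1, h.2] at hk

lemma hammingNorm_lt_card_fintype_of_eq_zero [Zero β] {x : ι → β} {k : ι} (hk : x k = 0) :
    hammingNorm x < Fintype.card ι :=
  card_lt_card (filter_ssubset.2 ⟨k, mem_univ k, not_not.2 hk⟩)

lemma hammingNorm_uncurry_single [DecidableEq ι] {κ : Type*} [Fintype κ] [Zero β]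
    (i : ι) (w : κ → β) : hammingNorm (Function.uncurry (Pi.single i w)) = hammingNorm w := by
  refine (congrArg card ?_).trans (card_map ⟨Prod.mk i, Prod.mk_right_injective i⟩)
  ext ⟨k, c⟩
  rcases eq_or_ne k i with rfl | hk
  · simp
  · simp [hk, hk.symm]

end hamming

lemma Fin.sum_univ_eq_sum_castLE_add {M : Type*} [AddCommMonoid M] {δ : ℕ} (hδ : 1 ≤ δ)
    (φ : Fin (δ + 1) → M) :
    ∑ c, φ c =
      ∑ s : Fin (δ - 1), φ (s.castLE (by omega)) + φ ⟨δ - 1, by omega⟩ + φ (Fin.last δ) := by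
  rw [Fin.sum_univ_castSucc, ← Fin.sum_congr' _ (Nat.sub_add_cancel hδ), Fin.sum_univ_castSucc]
  rfl

namespace LRC

variable {F κ : Type*} {δ ℓ : ℕ}

/-- The vector `(f | a | b)` of `F^(δ+1)`, indexed as the columns of a repair group. -/
def blockVec (δ : ℕ) (f : Fin (δ - 1) → F) (a b : F) : Fin (δ + 1) → F :=
  fun c => if h : (c : ℕ) < δ - 1 then f ⟨c, h⟩ else if (c : ℕ) = δ - 1 then a else b

section blockVec

variable (f : Fin (δ - 1) → F) (a b : F)

@[simp]
lemma blockVec_castLE (s : Fin (δ - 1)) : blockVec δ f a b (s.castLE (by omega)) = f s := by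
  simp [blockVec]

@[simp]
lemma blockVec_penultimate (hδ : 1 ≤ δ) : blockVec δ f a b ⟨δ - 1, by omega⟩ = a := by
  simp [blockVec]

@[simp]
lemma blockVec_last (hδ : 1 ≤ δ) : blockVec δ f a b (Fin.last δ) = b := by
  simp only [blockVec, Fin.val_last]
  rw [dif_neg (by omega), if_neg (by omega)]

end blockVec

lemma blockVec_dotProduct_blockVec [CommSemiring F] (hδ : 1 ≤ δ) (f g : Fin (δ - 1) → F)
    (a b a' b' : F) :
    blockVec δ f a b ⬝ᵥ blockVec δ g a' b' = f ⬝ᵥ g + a * a' + b * b' := by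
  rw [dotProduct, Fin.sum_univ_eq_sum_castLE_add hδ]
  simp [hδ, dotProduct]

section parityCheck

variable [CommRing F] (p q : Fin ℓ → Fin (δ - 1) → F) (uu vv : Fin ℓ → κ → F)

def parityCheck : Matrix ((Fin ℓ × Fin (δ - 1)) ⊕ κ) (Fin ℓ × Fin (δ + 1)) F :=
  fun row col => Sum.elim
    (fun rs : Fin ℓ × Fin (δ - 1) =>
      if rs.1 = col.1 then blockVec δ (Pi.single rs.2 1) (p rs.1 rs.2) (q rs.1 rs.2) col.2 else 0)
    (fun t => blockVec δ 0 (uu col.1 t) (vv col.1 t) col.2) row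

lemma parityCheck_eq {H : Matrix ((Fin ℓ × Fin (δ - 1)) ⊕ κ) (Fin ℓ × Fin (δ + 1)) F}
    (hH : ∀ row col, H row col = Sum.elim
      (fun rs : Fin ℓ × Fin (δ - 1) =>
        if rs.1 = col.1 then
          (if _h : (col.2 : ℕ) < δ - 1 then (if (col.2 : ℕ) = (rs.2 : ℕ) then 1 else 0)
           else if (col.2 : ℕ) = δ - 1 then p rs.1 rs.2 else q rs.1 rs.2)
        else 0)
      (fun t : κ =>
        if (col.2 : ℕ) < δ - 1 then 0
        else if (col.2 : ℕ) = δ - 1 then uu col.1 t else vv col.1 t) row) :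
    H = parityCheck p q uu vv := by
  ext (⟨k, s⟩ | t) ⟨k', c⟩ <;> simp [hH, parityCheck, blockVec, Pi.single_apply, Fin.ext_iff]

def groupWord (i : Fin ℓ) (a b : F) : Fin ℓ × Fin (δ + 1) → F :=
  Function.uncurry (Pi.single i (blockVec δ (-(a • p i + b • q i)) a b))

lemma parityCheck_mulVec_groupWord (hδ : 1 ≤ δ) (i : Fin ℓ) (a b : F) :
    parityCheck p q uu vv *ᵥ groupWord p q i a b =
      Sum.elim (0 : Fin ℓ × Fin (δ - 1) → F) (a • uu i + b • vv i) := by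
  ext (⟨k, s⟩ | t)
  all_goals
    rw [groupWord, Matrix.mulVec_uncurry_single]
    simp only [mulVec, submatrix_apply, id_eq, parityCheck, Sum.elim_inl, Sum.elim_inr]
  · by_cases hk : k = i
    · subst hk
      simp only [if_true]
      rw [blockVec_dotProduct_blockVec hδ]
      simp only [neg_add_rev, dotProduct_add, dotProduct_neg, dotProduct_smul, single_dotProduct,
        one_mul, smul_eq_mul, Pi.zero_apply]
      ring
    · simp [hk]
  · rw [blockVec_dotProduct_blockVec hδ]
    simp only [dotProduct_add, dotProduct_neg, dotProduct_smul, zero_dotProduct, smul_eq_mul,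
      mul_zero, neg_zero, add_zero, zero_add, Pi.add_apply, Pi.smul_apply]
    ring

end parityCheck

lemma exists_blockVec_ne_zero [Zero F] (hδ : 1 ≤ δ) (f : Fin (δ - 1) → F) {a b : F}
    (hab : a ≠ 0 ∨ b ≠ 0) : ∃ c, blockVec δ f a b c ≠ 0 := by
  rcases hab with ha | hb
  · exact ⟨⟨δ - 1, by omega⟩, by simpa [hδ] using ha⟩
  · exact ⟨Fin.last δ, by simpa [hδ] using hb⟩

section distance

variable [Field F] [DecidableEq F] {p q : Fin ℓ → Fin (δ - 1) → F} {uu vv : Fin ℓ → κ → F}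

lemma hammingNorm_groupWord_le (i : Fin ℓ) (a b : F) :
    hammingNorm (groupWord p q i a b) ≤ δ + 1 := by
  simpa [groupWord, hammingNorm_uncurry_single] using
    hammingNorm_le_card_fintype (x := blockVec δ (-(a • p i + b • q i)) a b)

lemma linearIndependent_pair (hδ : 1 ≤ δ)
    (hdist : ∀ x, parityCheck p q uu vv *ᵥ x = 0 → x ≠ 0 → δ + 2 ≤ hammingNorm x) (i : Fin ℓ) :
    LinearIndependent F ![uu i, vv i] := by
  refine LinearIndependent.pair_iff.2 fun a b hrel => ?_
  by_contra hne
  obtain ⟨c, hc⟩ := exists_blockVec_ne_zero hδ (-(a • p i + b • q i)) (not_and_or.1 hne)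
  have hcode : parityCheck p q uu vv *ᵥ groupWord p q i a b = 0 := by
    rw [parityCheck_mulVec_groupWord p q uu vv hδ, hrel, Sum.elim_zero_zero]
  have hx : groupWord p q i a b ≠ 0 := fun h => hc (by simpa [groupWord] using congrFun h (i, c))
  linarith [hdist _ hcode hx, hammingNorm_groupWord_le (p := p) (q := q) i a b]

lemma smul_add_smul_notMem_span_pair (hδ : 1 ≤ δ)
    (hdist : ∀ x, parityCheck p q uu vv *ᵥ x = 0 → x ≠ 0 → 2 * δ + 2 ≤ hammingNorm x)
    {i j : Fin ℓ} (hji : j ≠ i) {a b : F} (hab : a ≠ 0 ∨ b ≠ 0) {m : Fin (δ + 1)}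
    (hm : blockVec δ (-(a • p i + b • q i)) a b m = 0) :
    a • uu i + b • vv i ∉ Submodule.span F {uu j, vv j} := by
  rw [Submodule.mem_span_pair]
  rintro ⟨a', b', hrel⟩
  obtain ⟨c, hc⟩ := exists_blockVec_ne_zero hδ (-(a • p i + b • q i)) hab
  set x := groupWord p q i a b + groupWord p q j (-a') (-b')
  have hcode : parityCheck p q uu vv *ᵥ x = 0 := by
    rw [mulVec_add, parityCheck_mulVec_groupWord p q uu vv hδ,
      parityCheck_mulVec_groupWord p q uu vv hδ, ← hrel, ← Sum.elim_add_add, add_zero, neg_smul,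
      neg_smul, ← neg_add, add_neg_cancel, Sum.elim_zero_zero]
  have hx : x ≠ 0 := fun h => hc (by simpa [x, groupWord, hji] using congrFun h (i, c))
  have hweight : hammingNorm x ≤ δ + (δ + 1) := by
    refine (hammingNorm_add_le _ _).trans (add_le_add ?_ (hammingNorm_groupWord_le _ _ _))
    simpa [groupWord, hammingNorm_uncurry_single, Nat.lt_succ_iff] using
      hammingNorm_lt_card_fintype_of_eq_zero hm
  linarith [hdist _ hcode hx]

end distance

end LRC

theorem stmt_5_general {F : Type*} [Field F] [DecidableEq F]
    (δ ℓ : ℕ) (hδ : 2 ≤ δ)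
    (p q : Fin ℓ → Fin (δ - 1) → F)
    (uu vv : Fin ℓ → Fin 3 → F)
    (H : Matrix ((Fin ℓ × Fin (δ - 1)) ⊕ Fin 3) (Fin ℓ × Fin (δ + 1)) F)
    (hH : ∀ row col, H row col = Sum.elim
      (fun rs : Fin ℓ × Fin (δ - 1) =>
        if rs.1 = col.1 then
          (if h : (col.2 : ℕ) < δ - 1 then (if (col.2 : ℕ) = (rs.2 : ℕ) then 1 else 0)
           else if (col.2 : ℕ) = δ - 1 then p rs.1 rs.2 else q rs.1 rs.2)
        else 0)
      (fun t : Fin 3 =>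
        if (col.2 : ℕ) < δ - 1 then 0
        else if (col.2 : ℕ) = δ - 1 then uu col.1 t else vv col.1 t) row)
    (hdist : ∀ x : Fin ℓ × Fin (δ + 1) → F,
      H.mulVec x = 0 → x ≠ 0 → 2 * δ + 2 ≤ hammingNorm x) :
    (∀ i : Fin ℓ,
      Module.finrank F (Submodule.span F {uu i, vv i} : Submodule F (Fin 3 → F)) = 2) ∧
    (∀ i j : Fin ℓ, j ≠ i →
      uu i ∉ Submodule.span F {uu j, vv j} ∧
      vv i ∉ Submodule.span F {uu j, vv j} ∧
      ∀ m : Fin (δ - 1), ∀ a b : F, a ≠ 0 → b ≠ 0 → a * p i m + b * q i m = 0 →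
        a • uu i + b • vv i ∉ Submodule.span F {uu j, vv j}) := by
  have hδ1 : 1 ≤ δ := by omega
  obtain rfl := LRC.parityCheck_eq p q uu vv hH
  refine ⟨fun i => ?_, fun i j hji => ⟨?_, ?_, fun m a b ha _ hpq => ?_⟩⟩
  · rw [← Matrix.range_cons_cons_empty (uu i) (vv i) ![]]
    simpa using finrank_span_eq_card <| LRC.linearIndependent_pair hδ1
      (fun x hx hx0 => le_trans (by omega) (hdist x hx hx0)) i
  · simpa using LRC.smul_add_smul_notMem_span_pair hδ1 hdist hji (a := 1) (b := 0)
      (m := Fin.last δ) (by simp) (by simp [hδ1])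
  · simpa using LRC.smul_add_smul_notMem_span_pair hδ1 hdist hji (a := 0) (b := 1)
      (m := ⟨δ - 1, by omega⟩) (by simp) (by simp [hδ1])
  · exact LRC.smul_add_smul_notMem_span_pair hδ1 hdist hji (Or.inl ha)
      (m := m.castLE (by omega)) (by simpa using congrArg Neg.neg hpq)

/-- Lemma 3: let `C` be a `q`-ary optimal `(n, k, d = 2δ+2; r = 2, δ)`-LRC (`q ≥ δ+1`)
with disjoint repair groups and parity-check matrix in standard form: `ℓ` diagonal blocks
`(I_{δ−1} | pᵢ | qᵢ)`, each the generator matrix of a `[δ+1, δ−1, 3]` MDS code with all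
entries of `pᵢ, qᵢ` nonzero, and lower blocks `(0 | uᵢ | vᵢ)` with `uᵢ, vᵢ ∈ F_q³`.
Setting `Vᵢ = Span{uᵢ, vᵢ}`, then: (i) `dim Vᵢ = 2`; and (ii) for any `j ≠ i` the vectors
`uᵢ`, `vᵢ` and `aₘ uᵢ + bₘ vᵢ` (for every `(aₘ, bₘ) ∈ F* × F*` with
`aₘ p_{i,m} + bₘ q_{i,m} = 0`, `m ∈ [δ−1]`) do not belong to `Vⱼ`. -/
theorem stmt_5 {F : Type*} [Field F] [Fintype F] [DecidableEq F]
    (Q δ ℓ : ℕ) (hq : Fintype.card F = Q) (hQδ : δ + 1 ≤ Q) (hδ : 2 ≤ δ) (hℓ : 0 < ℓ)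
    (p q : Fin ℓ → Fin (δ - 1) → F)
    (hp : ∀ i m, p i m ≠ 0) (hqz : ∀ i m, q i m ≠ 0)
    (uu vv : Fin ℓ → Fin 3 → F)
    (H : Matrix ((Fin ℓ × Fin (δ - 1)) ⊕ Fin 3) (Fin ℓ × Fin (δ + 1)) F)
    (hH : ∀ row col, H row col = Sum.elim
      (fun rs : Fin ℓ × Fin (δ - 1) =>
        if rs.1 = col.1 then
          (if h : (col.2 : ℕ) < δ - 1 then (if (col.2 : ℕ) = (rs.2 : ℕ) then 1 else 0)
           else if (col.2 : ℕ) = δ - 1 then p rs.1 rs.2 else q rs.1 rs.2)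
        else 0)
      (fun t : Fin 3 =>
        if (col.2 : ℕ) < δ - 1 then 0
        else if (col.2 : ℕ) = δ - 1 then uu col.1 t else vv col.1 t) row)
    (hMDS : ∀ i : Fin ℓ, ∀ t : Finset (Fin (δ + 1)), t.card = δ - 1 →
      LinearIndependent F (fun c : t => fun s : Fin (δ - 1) =>
        H (Sum.inl (i, s)) (i, c.1)))
    (hdist : ∀ x : Fin ℓ × Fin (δ + 1) → F,
      H.mulVec x = 0 → x ≠ 0 → 2 * δ + 2 ≤ hammingNorm x) :
    (∀ i : Fin ℓ,
      Module.finrank F (Submodule.span F {uu i, vv i} : Submodule F (Fin 3 → F)) = 2) ∧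
    (∀ i j : Fin ℓ, j ≠ i →
      uu i ∉ Submodule.span F {uu j, vv j} ∧
      vv i ∉ Submodule.span F {uu j, vv j} ∧
      ∀ m : Fin (δ - 1), ∀ a b : F, a ≠ 0 → b ≠ 0 → a * p i m + b * q i m = 0 →
        a • uu i + b • vv i ∉ Submodule.span F {uu j, vv j}) :=
  stmt_5_general δ ℓ hδ p q uu vv H hH hdist
end

section
/- Suppose q ≥ δ+1 and there exist ℓ distinct lines L₁, …, L_ℓ in PG(2, q), not all passing through a common point, such that each L_i has at most q − δ points lying on some other L_j. Then ℓ ≤ ⌊(q² + q + 1)/(δ+2)⌋. -/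
/-!
Weight each point by `m = q - δ` if it lies on at most one of the lines and by `1` otherwise.
A point on `k ≤ m` lines then receives total weight at most `m`, while each line, having at
least `δ + 1 + m` points of which at most `m` are shared, carries weight at least `(δ + 2) m`.
Hence `ℓ (δ + 2) m ≤ m (q² + q + 1)`. The degree bound `k ≤ m` holds because some line `L_j`
misses the point `P`, and intersecting with `L_j` maps the lines through `P` injectively to the
shared points of `L_j`.
-/

open Module Finset

theorem card_lines_mul_le_card_points {α ι : Type*} [Fintype ι] [DecidableEq ι] (U : Finset α)
    (r : α → ι → Prop) [DecidableRel r] {d m : ℕ} (hm : 0 < m)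
    (hline : ∀ i, d + m ≤ #{a ∈ U | r a i})
    (hshared : ∀ i, #{a ∈ U | r a i ∧ ∃ j ≠ i, r a j} ≤ m)
    (hdeg : ∀ a ∈ U, #{i | r a i} ≤ m) :
    Fintype.card ι * (d + 1) ≤ #U := by
  -- `w a` is an integral stand-in for `m / #{i | r a i}`
  set w : α → ℕ := fun a => if #{i | r a i} ≤ 1 then m else 1 with hw
  have hpoint : ∀ a ∈ U, #{i | r a i} * w a ≤ m := by
    intro a ha
    by_cases h : #{i | r a i} ≤ 1
    · simp only [hw, if_pos h]; nlinarith
    · simp only [hw, if_neg h, mul_one]; exact hdeg a ha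
  have hline_weight : ∀ i, (d + 1) * m ≤ ∑ a ∈ U with r a i, w a := by
    intro i
    set A := {a ∈ U | r a i}
    have hshared_weight : #{a ∈ A | ∃ j ≠ i, r a j} ≤ ∑ a ∈ A with ∃ j ≠ i, r a j, w a := by
      simpa using card_nsmul_le_sum _ w 1 fun a _ => by simp only [hw]; split <;> omega
    have hprivate_weight : ∑ a ∈ A with ¬ ∃ j ≠ i, r a j, w a
        = #{a ∈ A | ¬ ∃ j ≠ i, r a j} * m := by
      rw [← smul_eq_mul, ← sum_const]
      refine sum_congr rfl fun a ha => if_pos ?_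
      simp only [A, mem_filter, not_exists, not_and] at ha
      have hsub : ({j | r a j} : Finset ι) ⊆ {i} := fun j hj => by
        simp only [mem_filter, mem_univ, true_and] at hj
        exact mem_singleton.2 (by_contra fun hji => ha.2 j hji hj)
      exact (card_le_card hsub).trans (card_singleton i).le
    have hsplit := card_filter_add_card_filter_not (s := A) (fun a => ∃ j ≠ i, r a j)
    have hs : #{a ∈ A | ∃ j ≠ i, r a j} ≤ m := by
      simpa only [A, filter_filter] using hshared i
    rw [← sum_filter_add_sum_filter_not A (fun a => ∃ j ≠ i, r a j), hprivate_weight]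
    have := hline i
    nlinarith
  have hdouble : ∑ i, ∑ a ∈ U with r a i, w a = ∑ a ∈ U, #{i | r a i} * w a := by
    rw [sum_comm' (t' := U) (s' := fun a => ({i | r a i} : Finset ι))
      fun i a => by simp [and_comm]]
    simp only [sum_const, smul_eq_mul]
  have : Fintype.card ι * (d + 1) * m ≤ #U * m :=
    calc Fintype.card ι * (d + 1) * m = ∑ i : ι, (d + 1) * m := by simp [mul_assoc]
      _ ≤ ∑ i, ∑ a ∈ U with r a i, w a := sum_le_sum fun i _ => hline_weight i
      _ = ∑ a ∈ U, #{i | r a i} * w a := hdouble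
      _ ≤ ∑ a ∈ U, m := sum_le_sum hpoint
      _ = #U * m := by simp
  exact Nat.le_of_mul_le_mul_right this hm

instance Submodule.finite_of_finite {K V : Type*} [Field K] [AddCommGroup V] [Module K V]
    [Finite V] : Finite (Submodule K V) :=
  Finite.of_injective _ SetLike.coe_injective

namespace Submodule

section Incidence

variable {K V : Type*} [Field K] [AddCommGroup V] [Module K V] [FiniteDimensional K V]

theorem finrank_inf_eq_one_of_finrank_eq_two (hV : finrank K V = 3) {L L' : Submodule K V}
    (hL : finrank K L = 2) (hL' : finrank K L' = 2) (hne : L ≠ L') :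
    finrank K ↥(L ⊓ L') = 1 := by
  have hlt : L ⊓ L' < L :=
    inf_lt_left.2 fun hle => hne (eq_of_le_of_finrank_eq hle (hL.trans hL'.symm))
  have := finrank_lt_finrank_of_lt hlt
  have := finrank_sup_add_finrank_inf_eq L L'
  have := hV ▸ (L ⊔ L').finrank_le
  omega

theorem sup_eq_of_finrank_eq_two {P Q L : Submodule K V} (hP : finrank K P = 1)
    (hQ : finrank K Q = 1) (hPQ : P ≠ Q) (hL : finrank K L = 2) (hPL : P ≤ L) (hQL : Q ≤ L) :
    P ⊔ Q = L := by
  have hlt : P < P ⊔ Q :=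
    left_lt_sup.2 fun hle => hPQ (eq_of_le_of_finrank_eq hle (hQ.trans hP.symm)).symm
  have := finrank_lt_finrank_of_lt hlt
  exact eq_of_le_of_finrank_le (sup_le hPL hQL) (by omega)

end Incidence

section Counting

variable (K V : Type*) [Field K] [Finite K] [AddCommGroup V] [Module K V]

theorem card_finrank_eq_one {n : ℕ} (h : finrank K V = n) :
    Nat.card {P : Submodule K V // finrank K P = 1} = ∑ i ∈ Finset.range n, Nat.card K ^ i := by
  rw [← Nat.card_congr (Projectivization.equivSubmodule K V),
    Projectivization.card_of_finrank K V h]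

theorem card_finrank_eq_one_le {L : Submodule K V} (hL : finrank K L = 2) :
    Nat.card {P : Submodule K V // finrank K P = 1 ∧ P ≤ L} = Nat.card K + 1 := by
  rw [← Projectivization.card_of_finrank_two K L hL,
    Nat.card_congr (Projectivization.equivSubmodule K L)]
  refine Nat.card_congr (Equiv.symm ?_)
  refine ((MapSubtype.orderIso L).toEquiv.subtypeEquiv fun H => ?_).trans
    ((Equiv.subtypeSubtypeEquivSubtypeInter _ _).trans (Equiv.subtypeEquivRight fun P => and_comm))
  change _ ↔ finrank K (map L.subtype H) = 1
  rw [finrank_map_subtype_eq]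

end Counting

end Submodule

theorem ncard_lines_through_le_ncard_shared_points {K V ι : Type*} [Field K] [AddCommGroup V]
    [Module K V] [Finite V] (hV : finrank K V = 3) {L : ι → Submodule K V}
    (hL : ∀ i, finrank K (L i) = 2) (hinj : Function.Injective L) {P : Submodule K V}
    (hP : finrank K P = 1) {j : ι} (hPj : ¬ P ≤ L j) :
    {i | P ≤ L i}.ncard ≤
      {Q : Submodule K V | finrank K Q = 1 ∧ Q ≤ L j ∧ ∃ k, k ≠ j ∧ Q ≤ L k}.ncard := by
  have hne : ∀ {i}, P ≤ L i → i ≠ j := fun hPi hij => hPj (hij ▸ hPi)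
  refine Set.ncard_le_ncard_of_injOn (fun i => L i ⊓ L j) (fun i hPi => ?_)
    (fun i₁ hi₁ i₂ hi₂ h => ?_) (Set.toFinite _)
  · exact ⟨Submodule.finrank_inf_eq_one_of_finrank_eq_two hV (hL i) (hL j)
      (hinj.ne (hne hPi)), inf_le_right, i, hne hPi, inf_le_left⟩
  · -- `P` and `Q = L i₁ ⊓ L j` are two points on both `L i₁` and `L i₂`
    have hQ := Submodule.finrank_inf_eq_one_of_finrank_eq_two hV (hL i₁) (hL j)
      (hinj.ne (hne hi₁))
    have hPQ : P ≠ L i₁ ⊓ L j := fun h => hPj (h ▸ inf_le_right)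
    have hQ₂ : L i₁ ⊓ L j ≤ L i₂ := (congrArg (· ≤ L i₂) h).mpr inf_le_left
    exact hinj ((Submodule.sup_eq_of_finrank_eq_two hP hQ hPQ (hL i₁) hi₁ inf_le_left).symm.trans
      (Submodule.sup_eq_of_finrank_eq_two hP hQ hPQ (hL i₂) hi₂ hQ₂))

/-- If `q ≥ δ+1` and there exist `ℓ` distinct lines in `PG(2,q)`, not all passing through a
common point, such that each line has at most `q − δ` points lying on some other line of
the family, then `ℓ ≤ ⌊(q² + q + 1)/(δ+2)⌋`. -/
theorem stmt_11 {F : Type*} [Field F] [Fintype F] (q δ ℓ : ℕ)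
    (hq : Fintype.card F = q) (hqδ : δ + 1 ≤ q)
    (L : Fin ℓ → Submodule F (Fin 3 → F)) (hL2 : ∀ i, Module.finrank F (L i) = 2)
    (hinj : Function.Injective L)
    (hnotsun : ¬ ∃ P : Submodule F (Fin 3 → F),
      Module.finrank F P = 1 ∧ ∀ i, P ≤ L i)
    (hint : ∀ i : Fin ℓ,
      {P : Submodule F (Fin 3 → F) | Module.finrank F P = 1 ∧ P ≤ L i ∧
        ∃ j, j ≠ i ∧ P ≤ L j}.ncard ≤ q - δ) :
    ℓ ≤ (q ^ 2 + q + 1) / (δ + 2) := by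
  classical
  let := Fintype.ofFinite (Submodule F (Fin 3 → F))
  have hV : finrank F (Fin 3 → F) = 3 := finrank_fin_fun F
  set U : Finset (Submodule F (Fin 3 → F)) := {P | finrank F P = 1}
  have hU : #U = q ^ 2 + q + 1 := by
    have := Submodule.card_finrank_eq_one F (Fin 3 → F) hV
    rw [Nat.card_eq_fintype_card, Fintype.card_subtype, Nat.card_eq_fintype_card, hq] at this
    simp [U, this, sum_range_succ]; ring
  rw [Nat.le_div_iff_mul_le (by omega), ← hU, ← Fintype.card_fin ℓ]
  apply card_lines_mul_le_card_points U (fun P i => P ≤ L i) (m := q - δ) (by omega)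
  · intro i
    have := Submodule.card_finrank_eq_one_le F _ (hL2 i)
    rw [Nat.card_eq_fintype_card, Fintype.card_subtype, Nat.card_eq_fintype_card, hq] at this
    rw [filter_filter, this]; omega
  · intro i
    convert hint i using 1
    rw [← Set.ncard_coe_finset]; congr; ext; simp [U]
  · intro P hP
    obtain ⟨j, hPj⟩ : ∃ j, ¬ P ≤ L j := by
      by_contra! h
      exact hnotsun ⟨P, (mem_filter.1 hP).2, h⟩
    calc #{i | P ≤ L i} = {i | P ≤ L i}.ncard := by rw [← Set.ncard_coe_finset, coe_filter_univ]
      _ ≤ _ := ncard_lines_through_le_ncard_shared_points hV hL2 hinj (mem_filter.1 hP).2 hPj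
      _ ≤ q - δ := hint j
end

section
/- Let C be a binary constant-weight code of length n, size M, minimum Hamming distance 2δ, and constant weight w. Then M(w² − wn + δn) ≤ δn (the second Johnson bound). -/
/-- Second Johnson bound: a binary constant-weight `(n, M, 2δ; w)` code satisfies
`M(w² − wn + δn) ≤ δn`. -/
theorem stmt_13 (n δ w : ℕ) (C : Finset (Fin n → ZMod 2))
    (hw : ∀ x ∈ C, hammingNorm x = w)
    (hd : ∀ x ∈ C, ∀ y ∈ C, x ≠ y → 2 * δ ≤ hammingDist x y) :
    (C.card : ℤ) * ((w : ℤ) ^ 2 - w * n + δ * n) ≤ (δ : ℤ) * n := by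
  classical
  set M : ℤ := (C.card : ℤ) with hM
  set e : ZMod 2 → ℤ := fun a => if a ≠ 0 then 1 else 0 with he
  -- pointwise identities
  have hee : ∀ a : ZMod 2, e a * e a = e a := by decide
  have hkey : ∀ a b : ZMod 2,
      2 * (e a * e b) = e a + e b - (if a ≠ b then (1 : ℤ) else 0) := by decide
  -- column counts
  set f : Fin n → ℤ := fun i => ∑ x ∈ C, e (x i) with hf
  -- weight as a sum
  have hN : ∀ x : Fin n → ZMod 2, ∑ i, e (x i) = (hammingNorm x : ℤ) := by
    intro x
    rw [hammingNorm, Finset.card_filter]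
    push_cast
    refine Finset.sum_congr rfl fun i _ => ?_
    by_cases h : x i = 0 <;> simp [he, h]
  have hNw : ∀ x ∈ C, ∑ i, e (x i) = (w : ℤ) := by
    intro x hx; rw [hN, hw x hx]
  -- distance as a sum
  have hD : ∀ x y : Fin n → ZMod 2,
      ∑ i, (if x i ≠ y i then (1 : ℤ) else 0) = (hammingDist x y : ℤ) := by
    intro x y
    rw [hammingDist, Finset.card_filter]
    push_cast
    refine Finset.sum_congr rfl fun i _ => ?_
    by_cases h : x i = y i <;> simp [h]
  -- overlap bound for distinct codewords
  have hov : ∀ x ∈ C, ∀ y ∈ C, x ≠ y →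
      ∑ i, e (x i) * e (y i) ≤ (w : ℤ) - δ := by
    intro x hx y hy hxy
    have h1 : 2 * ∑ i, e (x i) * e (y i)
        = (∑ i, e (x i)) + (∑ i, e (y i)) - ∑ i, (if x i ≠ y i then (1 : ℤ) else 0) := by
      rw [Finset.mul_sum, ← Finset.sum_add_distrib, ← Finset.sum_sub_distrib]
      exact Finset.sum_congr rfl fun i _ => hkey (x i) (y i)
    have h2 : (2 * δ : ℤ) ≤ (hammingDist x y : ℤ) := by
      exact_mod_cast hd x hx y hy hxy
    rw [hNw x hx, hNw y hy, hD] at h1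
    linarith
  -- sum of column counts
  have hsum : ∑ i, f i = M * w := by
    rw [hf]
    simp only [Finset.sum_comm (s := Finset.univ) (t := C)]
    rw [Finset.sum_congr rfl hNw]
    simp [hM, mul_comm]
  -- sum of squares as double sum of overlaps
  have hsq : ∑ i, f i ^ 2 = ∑ x ∈ C, ∑ y ∈ C, ∑ i, e (x i) * e (y i) := by
    have : ∀ i, f i ^ 2 = ∑ x ∈ C, ∑ y ∈ C, e (x i) * e (y i) := by
      intro i; rw [sq, hf, Finset.sum_mul_sum]
    rw [Finset.sum_congr rfl fun i _ => this i]
    rw [Finset.sum_comm]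
    refine Finset.sum_congr rfl fun x _ => Finset.sum_comm
  -- bound the double sum
  have hbound : ∑ x ∈ C, ∑ y ∈ C, ∑ i, e (x i) * e (y i)
      ≤ M * w + M * (M - 1) * ((w : ℤ) - δ) := by
    have hx1 : ∀ x ∈ C, ∑ y ∈ C, ∑ i, e (x i) * e (y i)
        ≤ (w : ℤ) + (M - 1) * ((w : ℤ) - δ) := by
      intro x hx
      rw [← Finset.add_sum_erase _ _ hx]
      have hdiag : ∑ i, e (x i) * e (x i) = (w : ℤ) := by
        rw [Finset.sum_congr rfl fun i _ => hee (x i)]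
        exact hNw x hx
      have hrest : ∑ y ∈ C.erase x, ∑ i, e (x i) * e (y i)
          ≤ ((C.erase x).card : ℤ) * ((w : ℤ) - δ) := by
        have := Finset.sum_le_card_nsmul (C.erase x)
          (fun y => ∑ i, e (x i) * e (y i)) ((w : ℤ) - δ)
          (fun y hy => hov x hx y (Finset.mem_of_mem_erase hy)
            (Ne.symm (Finset.ne_of_mem_erase hy)))
        simpa [nsmul_eq_mul] using this
      have hcard : ((C.erase x).card : ℤ) = M - 1 := by
        rw [Finset.card_erase_of_mem hx]
        have : 1 ≤ C.card := Finset.card_pos.mpr ⟨x, hx⟩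
        push_cast [Nat.cast_sub this]
        ring
      rw [hcard] at hrest
      linarith [hdiag, hrest]
    calc ∑ x ∈ C, ∑ y ∈ C, ∑ i, e (x i) * e (y i)
        ≤ ∑ _x ∈ C, ((w : ℤ) + (M - 1) * ((w : ℤ) - δ)) :=
          Finset.sum_le_sum hx1
      _ = M * ((w : ℤ) + (M - 1) * ((w : ℤ) - δ)) := by
          rw [Finset.sum_const, nsmul_eq_mul]
      _ = M * w + M * (M - 1) * ((w : ℤ) - δ) := by ring
  -- Cauchy–Schwarz
  have hCS : (M * w) ^ 2 ≤ (n : ℤ) * ∑ i, f i ^ 2 := by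
    have := sq_sum_le_card_mul_sum_sq (s := (Finset.univ : Finset (Fin n))) (f := f)
    rw [hsum] at this
    simpa using this
  have hmain : (M * w) ^ 2 ≤ (n : ℤ) * (M * w + M * (M - 1) * ((w : ℤ) - δ)) := by
    calc (M * w) ^ 2 ≤ (n : ℤ) * ∑ i, f i ^ 2 := hCS
      _ = (n : ℤ) * (∑ x ∈ C, ∑ y ∈ C, ∑ i, e (x i) * e (y i)) := by rw [hsq]
      _ ≤ (n : ℤ) * (M * w + M * (M - 1) * ((w : ℤ) - δ)) := by
          apply mul_le_mul_of_nonneg_left hbound (by positivity)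
  -- conclude
  rcases Nat.eq_zero_or_pos C.card with h0 | hpos
  · rw [hM, h0]
    push_cast
    have : (0 : ℤ) ≤ (δ : ℤ) * n := by positivity
    linarith
  · have hMpos : (0 : ℤ) < M := by rw [hM]; exact_mod_cast hpos
    have hfin : M * (M * ((w : ℤ) ^ 2 - w * n + δ * n)) ≤ M * ((δ : ℤ) * n) := by
      nlinarith [hmain]
    exact le_of_mul_le_mul_left hfin hMpos
end

section
/- Let C be a binary constant-weight code of length n, minimum distance 2δ, and weight w with w ≥ δ−1 ≥ 0. Then |C| ≤ C(n, w−δ+1) / C(w, w−δ+1) (the first Johnson bound). -/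
/-- First Johnson bound: a binary constant-weight code of length `n`, minimum distance `2δ`
and weight `w` with `w ≥ δ−1 ≥ 0` satisfies `|C| ≤ C(n, w−δ+1)/C(w, w−δ+1)`. -/
theorem stmt_14 (n δ w : ℕ) (hδ : 1 ≤ δ) (hwδ : δ - 1 ≤ w)
    (C : Finset (Fin n → ZMod 2))
    (hw : ∀ x ∈ C, hammingNorm x = w)
    (hd : ∀ x ∈ C, ∀ y ∈ C, x ≠ y → 2 * δ ≤ hammingDist x y) :
    (C.card : ℚ) ≤ (Nat.choose n (w + 1 - δ) : ℚ) / (Nat.choose w (w + 1 - δ) : ℚ) := by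
  set k := w + 1 - δ with hk
  have hkw : k ≤ w := by omega
  -- support finset
  set S : (Fin n → ZMod 2) → Finset (Fin n) := fun x => {i | x i ≠ 0} with hS
  have hScard : ∀ x ∈ C, (S x).card = w := fun x hx => hw x hx
  -- intersection bound
  have hI : ∀ x ∈ C, ∀ y ∈ C, x ≠ y → (S x ∩ S y).card < k := by
    intro x hx y hy hxy
    have hdist : hammingDist x y + 2 * (S x ∩ S y).card = (S x).card + (S y).card := by
      have heq : ({i | x i ≠ y i} : Finset (Fin n)) = (S x ∪ S y) \ (S x ∩ S y) := by
        ext i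
        simp only [Finset.mem_filter, Finset.mem_univ, true_and, Finset.mem_sdiff,
          Finset.mem_union, Finset.mem_inter, hS]
        have key : ∀ a b : ZMod 2, (a ≠ b ↔ (a ≠ 0 ∨ b ≠ 0) ∧ ¬(a ≠ 0 ∧ b ≠ 0)) := by decide
        exact key (x i) (y i)
      have hsub : S x ∩ S y ⊆ S x ∪ S y := (Finset.inter_subset_left).trans Finset.subset_union_left
      have := Finset.card_union_add_card_inter (S x) (S y)
      have hle := Finset.card_le_card hsub
      rw [hammingDist, heq, Finset.card_sdiff_of_subset hsub]
      omega
    have h2δ := hd x hx y hy hxy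
    have := hScard x hx
    have := hScard y hy
    omega
  -- counting
  have hcount : C.card * Nat.choose w k ≤ Nat.choose n k := by
    have hdisj : ∀ x ∈ C, ∀ y ∈ C, x ≠ y →
        Disjoint ((S x).powersetCard k) ((S y).powersetCard k) := by
      intro x hx y hy hxy
      rw [Finset.disjoint_left]
      intro s hs hs'
      rw [Finset.mem_powersetCard] at hs hs'
      have : s ⊆ S x ∩ S y := Finset.subset_inter hs.1 hs'.1
      have := Finset.card_le_card this
      have := hI x hx y hy hxy
      omega
    have hcard : (C.biUnion fun x => (S x).powersetCard k).card
        = C.card * Nat.choose w k := by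
      rw [Finset.card_biUnion hdisj]
      rw [Finset.sum_congr rfl fun x hx => by
        rw [Finset.card_powersetCard, hScard x hx]]
      simp [mul_comm]
    have hsub : (C.biUnion fun x => (S x).powersetCard k)
        ⊆ (Finset.univ : Finset (Fin n)).powersetCard k := by
      intro s hs
      rw [Finset.mem_biUnion] at hs
      obtain ⟨x, hx, hs⟩ := hs
      rw [Finset.mem_powersetCard] at hs ⊢
      exact ⟨Finset.subset_univ s, hs.2⟩
    have := Finset.card_le_card hsub
    rw [hcard, Finset.card_powersetCard, Finset.card_univ, Fintype.card_fin] at this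
    exact this
  have hpos : 0 < (Nat.choose w k : ℚ) := by
    exact_mod_cast Nat.choose_pos hkw
  rw [le_div_iff₀ hpos]
  exact_mod_cast hcount
end

section
/- Let A be a matrix over a field F with block structure whose i-th block row is (0 … 0 | I_{δ−1} P_i | 0 … 0) stacked over a bottom block row (V₁ V₂ … V_ℓ), where each (I_{δ−1} | P_i) generates an [r+δ−1, δ−1] code in which every δ−1 columns are independent (MDS dual). If the code defined by A as parity-check matrix has minimum distance d ≥ δ+1 and some δ columns within block i are linearly dependent with dependency coefficients λ, then the vector V_i·λ (restricted to those columns) is nonzero; moreover, if d ≥ 2δ+1, the projective points V_i·λ arising from different blocks or different column δ-subsets are pairwise distinct. -/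
theorem support_ge {F : Type*} [Field F] [DecidableEq F]
    (r δ : ℕ) (hr : 0 < r) (hδ : 2 ≤ δ)
    (M : Matrix (Fin (δ - 1)) (Fin (r + δ - 1)) F)
    (hM : ∀ s : Finset (Fin (r + δ - 1)), s.card = δ - 1 →
      LinearIndependent F (fun j : s => fun t : Fin (δ - 1) => M t j.1))
    (l : Fin (r + δ - 1) → F) (hl : l ≠ 0) (h0 : M.mulVec l = 0) :
    δ ≤ (Finset.univ.filter fun j => l j ≠ 0).card := by
  by_contra hlt
  push_neg at hlt
  have hle : (Finset.univ.filter fun j => l j ≠ 0).card ≤ δ - 1 := by omega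
  obtain ⟨s₀, hsub, hcard⟩ := Finset.exists_superset_card_eq hle (by
    simp [Fintype.card_fin]; omega)
  have hli := hM s₀ hcard
  rw [Fintype.linearIndependent_iff] at hli
  have hzero : ∀ j : s₀, l j.1 = 0 := by
    apply hli
    funext t
    simp only [Finset.sum_apply, Pi.smul_apply, smul_eq_mul, Pi.zero_apply]
    have h1 : ∑ j : s₀, l j.1 * M t j.1 = ∑ j ∈ s₀, l j * M t j :=
      Finset.sum_coe_sort s₀ (fun j => l j * M t j)
    rw [h1, Finset.sum_subset (Finset.subset_univ s₀) (by
      intro j _ hj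
      have : l j = 0 := by
        by_contra h
        exact hj (hsub (by simp [h]))
      simp [this])]
    have := congrFun h0 t
    simpa [Matrix.mulVec, dotProduct, mul_comm] using this
  apply hl
  funext j
  show l j = 0
  by_contra h
  exact h (hzero ⟨j, hsub (by simp [h])⟩)



/-- Key structural step: let `H` be a standard-form parity-check matrix with `ℓ` diagonal
locality blocks `(I_{δ−1} | Pᵢ)` (each an `[r+δ−1, δ−1]` generator matrix `Hloc i` in
which every `δ−1` columns are linearly independent, i.e. the parity-check matrix of an
MDS code) over bottom blocks `(W 1 | ⋯ | W ℓ)` of `u` rows.  If `l` is a dependency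
vector supported on some `δ` columns of block `i` (so `Hloc i *ᵥ l = 0`), then:
(a) whenever the code with parity-check matrix `H` has minimum distance `d ≥ δ+1`, the
vector `W i *ᵥ l ∈ F_q^u` is nonzero; and (b) whenever `d ≥ 2δ+1`, the projective points
`W i *ᵥ l` arising from different blocks or different `δ`-subsets of columns are pairwise
distinct. -/
theorem stmt_17 {F : Type*} [Field F] [DecidableEq F]
    (r δ ℓ u : ℕ) (hr : 0 < r) (hδ : 2 ≤ δ) (hℓ : 0 < ℓ) (hu : 0 < u)
    (Hloc : Fin ℓ → Matrix (Fin (δ - 1)) (Fin (r + δ - 1)) F)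
    (W : Fin ℓ → Matrix (Fin u) (Fin (r + δ - 1)) F)
    (hMDS : ∀ i : Fin ℓ, ∀ s : Finset (Fin (r + δ - 1)), s.card = δ - 1 →
      LinearIndependent F (fun j : s => fun t : Fin (δ - 1) => Hloc i t j.1))
    (H : Matrix ((Fin ℓ × Fin (δ - 1)) ⊕ Fin u) (Fin ℓ × Fin (r + δ - 1)) F)
    (hH : ∀ row col, H row col = Sum.elim
      (fun p : Fin ℓ × Fin (δ - 1) => if p.1 = col.1 then Hloc p.1 p.2 col.2 else 0)
      (fun t : Fin u => W col.1 t col.2) row) :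
    ((∀ x : Fin ℓ × Fin (r + δ - 1) → F, H.mulVec x = 0 → x ≠ 0 →
        δ + 1 ≤ hammingNorm x) →
      ∀ (i : Fin ℓ) (s : Finset (Fin (r + δ - 1))) (l : Fin (r + δ - 1) → F),
        s.card = δ → (∀ j, l j ≠ 0 → j ∈ s) → l ≠ 0 → (Hloc i).mulVec l = 0 →
        (W i).mulVec l ≠ 0) ∧
    ((∀ x : Fin ℓ × Fin (r + δ - 1) → F, H.mulVec x = 0 → x ≠ 0 →
        2 * δ + 1 ≤ hammingNorm x) →
      ∀ (i i' : Fin ℓ) (s s' : Finset (Fin (r + δ - 1)))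
        (l l' : Fin (r + δ - 1) → F),
        s.card = δ → (∀ j, l j ≠ 0 → j ∈ s) → l ≠ 0 → (Hloc i).mulVec l = 0 →
        s'.card = δ → (∀ j, l' j ≠ 0 → j ∈ s') → l' ≠ 0 → (Hloc i').mulVec l' = 0 →
        (i, s) ≠ (i', s') →
        ∀ c : F, c • (W i).mulVec l ≠ (W i').mulVec l') := by
  -- pushing mulVec through block-indicator vectors
  have push : ∀ (m : ℕ) (M : Fin ℓ → Matrix (Fin m) (Fin (r + δ - 1)) F)
      (a b : Fin ℓ) (w : Fin (r + δ - 1) → F),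
      (M a).mulVec (if a = b then w else 0) =
        if a = b then (M b).mulVec w else 0 := by
    intro m M a b w
    by_cases h : a = b
    · rw [if_pos h, if_pos h, h]
    · rw [if_neg h, if_neg h, Matrix.mulVec_zero]
  -- general computation of H.mulVec on block-structured vectors
  have key : ∀ v : Fin ℓ → Fin (r + δ - 1) → F,
      H.mulVec (fun p => v p.1 p.2) = Sum.elim
        (fun p : Fin ℓ × Fin (δ - 1) => (Hloc p.1).mulVec (v p.1) p.2)
        (fun t : Fin u => ∑ a, (W a).mulVec (v a) t) := by
    intro v
    funext row
    rcases row with p | t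
    · simp only [Matrix.mulVec, dotProduct, hH, Sum.elim_inl,
        Fintype.sum_prod_type, ite_mul, zero_mul]
      rw [Finset.sum_congr rfl (fun a (_ : a ∈ Finset.univ) =>
        show (∑ b, if p.1 = a then Hloc p.1 p.2 b * v a b else 0)
          = if p.1 = a then ∑ b, Hloc p.1 p.2 b * v a b else 0 from by
          split <;> simp)]
      rw [Finset.sum_ite_eq Finset.univ p.1 (fun a => ∑ b, Hloc p.1 p.2 b * v a b)]
      simp
    · simp only [Matrix.mulVec, dotProduct, hH, Sum.elim_inr,
        Fintype.sum_prod_type]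
  -- part (a), proven as a standalone fact
  have parta : (∀ x : Fin ℓ × Fin (r + δ - 1) → F, H.mulVec x = 0 → x ≠ 0 →
        δ + 1 ≤ hammingNorm x) →
      ∀ (i : Fin ℓ) (s : Finset (Fin (r + δ - 1))) (l : Fin (r + δ - 1) → F),
        s.card = δ → (∀ j, l j ≠ 0 → j ∈ s) → l ≠ 0 → (Hloc i).mulVec l = 0 →
        (W i).mulVec l ≠ 0 := by
    intro hd i s l hs hsupp hl h0 hW
    set v : Fin ℓ → Fin (r + δ - 1) → F := fun a => if a = i then l else 0 with hv
    set x : Fin ℓ × Fin (r + δ - 1) → F := fun p => v p.1 p.2 with hx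
    have hx0 : H.mulVec x = 0 := by
      rw [hx, key v]
      funext row
      rcases row with p | t
      · simp only [Sum.elim_inl, hv, Pi.zero_apply]
        rw [push _ Hloc p.1 i l]
        split <;> simp [h0]
      · simp only [Sum.elim_inr, hv, Pi.zero_apply]
        rw [Finset.sum_congr rfl (fun a (_ : a ∈ Finset.univ) =>
          congrFun (push _ W a i l) t)]
        rw [Finset.sum_congr rfl (fun a (_ : a ∈ Finset.univ) =>
          show (if a = i then (W i).mulVec l else 0) t
            = if a = i then (W i).mulVec l t else 0 from by split <;> simp)]
        rw [Finset.sum_ite_eq' Finset.univ i (fun _ => (W i).mulVec l t)]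
        simp [hW]
    have hxne : x ≠ 0 := by
      obtain ⟨j, hj⟩ := Function.ne_iff.mp hl
      intro h
      apply hj
      have := congrFun h (i, j)
      simpa [hx, hv] using this
    have hnorm : hammingNorm x ≤ δ := by
      calc hammingNorm x ≤ ({i} ×ˢ s).card := by
            apply Finset.card_le_card
            intro p hp
            simp only [hammingNorm, Finset.mem_filter, Finset.mem_univ, true_and] at hp
            simp only [hx, hv] at hp
            by_cases h : p.1 = i
            · rw [Finset.mem_product]
              refine ⟨by simp [h], hsupp _ ?_⟩
              rw [if_pos h] at hp
              exact hp
            · rw [if_neg h] at hp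
              simp at hp
        _ = δ := by simp [Finset.card_product, hs]
    have := hd x hx0 hxne
    omega
  refine ⟨parta, ?_⟩
  intro hd i i' s s' l l' hs hsupp hl h0 hs' hsupp' hl' h0' hne c hc
  have hd1 : ∀ x : Fin ℓ × Fin (r + δ - 1) → F, H.mulVec x = 0 → x ≠ 0 →
      δ + 1 ≤ hammingNorm x := fun x h1 h2 => le_trans (by omega) (hd x h1 h2)
  set v : Fin ℓ → Fin (r + δ - 1) → F :=
    fun a => (if a = i then c • l else 0) - (if a = i' then l' else 0) with hv
  set x : Fin ℓ × Fin (r + δ - 1) → F := fun p => v p.1 p.2 with hx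
  have hveq : ∀ (m : ℕ) (M : Fin ℓ → Matrix (Fin m) (Fin (r + δ - 1)) F) (a : Fin ℓ),
      (M a).mulVec (v a) = (if a = i then c • (M i).mulVec l else 0) -
        (if a = i' then (M i').mulVec l' else 0) := by
    intro m M a
    rw [hv]
    simp only [Matrix.mulVec_sub]
    rw [push _ M a i (c • l), push _ M a i' l', Matrix.mulVec_smul]
  have hx0 : H.mulVec x = 0 := by
    rw [hx, key v]
    funext row
    rcases row with p | t
    · simp only [Sum.elim_inl, Pi.zero_apply]
      rw [hveq _ Hloc p.1]
      simp [h0, h0']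
    · simp only [Sum.elim_inr, Pi.zero_apply]
      rw [Finset.sum_congr rfl (fun a (_ : a ∈ Finset.univ) =>
        congrFun (hveq _ W a) t)]
      simp only [Pi.sub_apply, ite_apply, Pi.zero_apply, Pi.smul_apply]
      rw [Finset.sum_sub_distrib,
        Finset.sum_ite_eq' Finset.univ i (fun _ => c • (W i).mulVec l t),
        Finset.sum_ite_eq' Finset.univ i' (fun _ => (W i').mulVec l' t)]
      simp only [Finset.mem_univ, if_pos]
      have := congrFun hc t
      simp only [Pi.smul_apply] at this
      rw [this, sub_self]
  have hxne : x ≠ 0 := by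
    intro hzero
    by_cases hc0 : c = 0
    · apply parta hd1 i' s' l' hs' hsupp' hl' h0'
      rw [← hc, hc0]
      simp
    · by_cases hii : i = i'
      · subst hii
        have hss : s ≠ s' := by
          intro h; exact hne (by rw [h])
        have hll : ∀ j, l' j = c * l j := by
          intro j
          have := congrFun hzero (i, j)
          simp only [hx, hv, Pi.zero_apply, Pi.sub_apply, if_pos rfl,
            Pi.smul_apply, smul_eq_mul] at this
          exact (sub_eq_zero.mp this).symm
        have hsup : (Finset.univ.filter fun j => l j ≠ 0) = s :=
          Finset.eq_of_subset_of_card_le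
            (fun j hj => hsupp j (by simpa using hj))
            (by rw [hs]; exact support_ge r δ hr hδ (Hloc i) (hMDS i) l hl h0)
        have hsup' : (Finset.univ.filter fun j => l' j ≠ 0) = s' :=
          Finset.eq_of_subset_of_card_le
            (fun j hj => hsupp' j (by simpa using hj))
            (by rw [hs']; exact support_ge r δ hr hδ (Hloc i) (hMDS i) l' hl' h0')
        apply hss
        rw [← hsup, ← hsup']
        apply Finset.filter_congr
        intro j _
        simp [hll j, hc0]
      · obtain ⟨j', hj'⟩ := Function.ne_iff.mp hl'
        have := congrFun hzero (i', j')
        simp only [hx, hv, Pi.zero_apply, Pi.sub_apply, if_neg (Ne.symm hii),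
          if_pos rfl, Pi.zero_apply, zero_sub, neg_eq_zero] at this
        exact hj' (by simpa using this)
  have hnorm : hammingNorm x ≤ 2 * δ := by
    calc hammingNorm x ≤ (({i} ×ˢ s) ∪ ({i'} ×ˢ s')).card := by
          apply Finset.card_le_card
          intro p hp
          simp only [hammingNorm, Finset.mem_filter, Finset.mem_univ, true_and] at hp
          simp only [hx, hv, Pi.sub_apply, ite_apply, Pi.zero_apply,
            Pi.smul_apply, smul_eq_mul] at hp
          rcases p with ⟨a, b⟩
          simp only [Finset.mem_union, Finset.mem_product, Finset.mem_singleton]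
          by_cases h : a = i
          · by_cases h' : a = i'
            · rw [if_pos h, if_pos h'] at hp
              by_cases hb : l b = 0
              · refine Or.inr ⟨h', hsupp' b ?_⟩
                intro h2
                apply hp
                rw [hb, h2, mul_zero, sub_zero]
              · exact Or.inl ⟨h, hsupp b hb⟩
            · rw [if_pos h, if_neg h', sub_zero] at hp
              refine Or.inl ⟨h, hsupp b ?_⟩
              intro h2
              apply hp
              rw [h2, mul_zero]
          · by_cases h' : a = i'
            · rw [if_neg h, if_pos h', zero_sub, neg_ne_zero] at hp
              exact Or.inr ⟨h', hsupp' b hp⟩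
            · rw [if_neg h, if_neg h'] at hp
              exact absurd (by rw [sub_zero]) hp
      _ ≤ ({i} ×ˢ s).card + ({i'} ×ˢ s').card := Finset.card_union_le _ _
      _ ≤ 2 * δ := by simp [Finset.card_product, hs, hs']; omega
  have := hd x hx0 hxne
  omega
end

section
/- For prime power q and δ ≥ 2 with q ≥ δ+1: (δ+1)·⌊(q²+q+1)/(δ+2)⌋ < (δ+1)·⌊(q³−1)/((q−1)·(δ+1))⌋ whenever q ≥ δ+2; i.e., the incidence-matrix bound of Theorem 5 improves on the general counting bound for d = 2δ+2, r = 2. -/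
/-- For a prime power `q` and `δ ≥ 2` with `q ≥ δ+2`, the incidence-matrix bound
`(δ+1)·⌊(q²+q+1)/(δ+2)⌋` is strictly smaller than the general counting bound
`(δ+1)·⌊(q³−1)/((q−1)·(δ+1))⌋` for `d = 2δ+2`, `r = 2`. -/
theorem stmt_18 (q δ : ℕ) (hq : ∃ p m : ℕ, p.Prime ∧ 0 < m ∧ q = p ^ m)
    (hδ : 2 ≤ δ) (hqδ : δ + 2 ≤ q) :
    (δ + 1) * ((q ^ 2 + q + 1) / (δ + 2))
      < (δ + 1) * ((q ^ 3 - 1) / ((q - 1) * (δ + 1))) := by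
  obtain ⟨k, rfl⟩ : ∃ k, q = k + 1 := ⟨q - 1, by omega⟩
  set N : ℕ := (k + 1) ^ 2 + (k + 1) + 1 with hN
  have hcube : (k + 1) ^ 3 - 1 = (k + 1 - 1) * N := by
    simp only [hN, Nat.add_sub_cancel]
    have : (k + 1) ^ 3 = k * ((k + 1) ^ 2 + (k + 1) + 1) + 1 := by ring
    omega
  rw [hcube, show k + 1 - 1 = k from rfl,
    Nat.mul_div_mul_left N (δ + 1) (by omega : 0 < k)]
  apply Nat.mul_lt_mul_left (by omega : 0 < δ + 1) |>.mpr
  have hm : δ + 1 ≤ N / (δ + 2) := by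
    rw [Nat.le_div_iff_mul_le (by omega)]
    have hk : δ + 1 ≤ k := by omega
    nlinarith [sq_nonneg k]
  have hle : N / (δ + 2) * (δ + 2) ≤ N := Nat.div_mul_le_self N (δ + 2)
  have : N / (δ + 2) + 1 ≤ N / (δ + 1) := by
    rw [Nat.le_div_iff_mul_le (by omega)]
    nlinarith
  omega
end
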